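/- arXiv:1603.07193 — 6 statements merged into one kernel-verified Lean document; each statement's English description precedes it below -/
import Mathlib

section
/- ζ(3) = ζ(2,1), i.e. the Riemann zeta value at 3 equals the double zeta value ∑_{j>k≥1} 1/(j² k). -/
open scoped BigOperators

/-- Riemann zeta value `ζ(n) = ∑_{m ≥ 1} 1/m^n`. -/
noncomputable def rzeta (n : ℕ) : ℝ := ∑' m : ℕ, 1 / ((m : ℝ) + 1) ^ n

/-- Double zeta value `ζ(r,s) = ∑_{j > k ≥ 1} 1/(j^r k^s)`. -/
noncomputable def dzeta (r s : ℕ) : ℝ :=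
  ∑' p : {q : ℕ × ℕ // q.2 < q.1 ∧ 0 < q.2},
    1 / (((p : ℕ × ℕ).1 : ℝ) ^ r * ((p : ℕ × ℕ).2 : ℝ) ^ s)

open Filter Topology Finset
open scoped ENNReal

noncomputable def harm (n : ℕ) : ℝ := ∑ i ∈ Finset.range n, (1:ℝ)/(i+1)

lemma harm_succ (n : ℕ) : harm (n+1) = harm n + 1/(n+1) := by
  simp [harm, Finset.sum_range_succ]

lemma harm_nonneg (n : ℕ) : 0 ≤ harm n :=
  Finset.sum_nonneg fun i _ => by positivity

lemma tendsto_one_div_add (C : ℝ) : Tendsto (fun n : ℕ => 1/((n:ℝ)+C)) atTop (𝓝 0) := by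
  simp only [one_div]
  exact (tendsto_atTop_add_const_right atTop C tendsto_natCast_atTop_atTop).inv_tendsto_atTop

/-- simple telescoping: ∑_a 1/((a+c+1)(a+c+2)) = 1/(c+1) -/
lemma hasSum_tail (c : ℕ) :
    HasSum (fun a : ℕ => 1/(((a:ℝ)+c+1)*((a:ℝ)+c+2))) (1/((c:ℝ)+1)) := by
  have hpos : ∀ a : ℕ, (0:ℝ) ≤ 1/(((a:ℝ)+c+1)*((a:ℝ)+c+2)) := fun a => by positivity
  rw [hasSum_iff_tendsto_nat_of_nonneg hpos]
  have key : ∀ n : ℕ, ∑ a ∈ Finset.range n, 1/(((a:ℝ)+c+1)*((a:ℝ)+c+2))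
      = 1/((c:ℝ)+1) - 1/((n:ℝ)+c+1) := by
    intro n
    have : ∀ a : ℕ, 1/(((a:ℝ)+c+1)*((a:ℝ)+c+2))
        = (fun a : ℕ => 1/((a:ℝ)+c+1)) a - (fun a : ℕ => 1/((a:ℝ)+c+1)) (a+1) := by
      intro a
      have h1 : ((a:ℝ)+c+1) ≠ 0 := by positivity
      have h2 : ((a:ℝ)+c+2) ≠ 0 := by positivity
      have h3 : (((a:ℝ)+1)+c+1) = ((a:ℝ)+c+2) := by ring
      simp only [Nat.cast_add, Nat.cast_one, h3]
      rw [div_sub_div _ _ h1 h2, one_mul, mul_one]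
      congr 1
      ring
    rw [Finset.sum_congr rfl fun a _ => this a, Finset.sum_range_sub']
    norm_num
  simp only [key]
  have h1 : Tendsto (fun n : ℕ => 1/((n:ℝ)+((c:ℝ)+1))) atTop (𝓝 0) := tendsto_one_div_add _
  have := (tendsto_const_nhds (x := 1/((c:ℝ)+1)) (f := atTop (α := ℕ))).sub h1
  simpa [add_assoc] using this

lemma harm_gap (N l : ℕ) : harm (N + l) - harm N = ∑ j ∈ Finset.range l, 1/((N:ℝ)+j+1) := by
  induction l with
  | zero => simp
  | succ l ih =>
      rw [show N + (l+1) = (N+l)+1 from rfl, harm_succ, Finset.sum_range_succ, ← ih]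
      push_cast
      ring

/-- ∑_{k≥0} 1/((k+1)(k+l+2)) = harm(l+1)/(l+1) -/
lemma hasSum_harm (l : ℕ) :
    HasSum (fun k : ℕ => 1/(((k:ℝ)+1)*((k:ℝ)+l+2))) (harm (l+1) / ((l:ℝ)+1)) := by
  have hpos : ∀ k : ℕ, (0:ℝ) ≤ 1/(((k:ℝ)+1)*((k:ℝ)+l+2)) := fun k => by positivity
  rw [hasSum_iff_tendsto_nat_of_nonneg hpos]
  have key : ∀ n : ℕ, ∑ k ∈ Finset.range n, 1/(((k:ℝ)+1)*((k:ℝ)+l+2))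
      = (harm (l+1) - (harm (n+(l+1)) - harm n))/((l:ℝ)+1) := by
    intro n
    induction n with
    | zero => simp [harm]
    | succ n ih =>
        rw [Finset.sum_range_succ, ih,
          show n + 1 + (l+1) = (n+(l+1))+1 from by ring, harm_succ (n+(l+1)), harm_succ n]
        have h1 : ((n:ℝ)+1) ≠ 0 := by positivity
        have h2 : ((n:ℝ)+l+2) ≠ 0 := by positivity
        have h3 : ((l:ℝ)+1) ≠ 0 := by positivity
        have hterm : (1:ℝ)/(((n:ℝ)+1)*((n:ℝ)+l+2))
            = (1/((n:ℝ)+1) - 1/((n:ℝ)+l+2))/((l:ℝ)+1) := by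
          rw [div_sub_div _ _ h1 h2, div_div]
          rw [div_eq_div_iff (by positivity) (by positivity)]
          ring
        rw [hterm]
        push_cast
        ring
  simp only [key]
  have h2 : Tendsto (fun n : ℕ => harm (n+(l+1)) - harm n) atTop (𝓝 0) := by
    simp only [harm_gap]
    have := tendsto_finset_sum (Finset.range (l+1))
      (fun j _ => tendsto_one_div_add ((j:ℝ)+1))
    simpa [add_assoc] using this
  have := ((tendsto_const_nhds (x := harm (l+1)) (f := atTop (α := ℕ))).sub h2).div_const
    ((l:ℝ)+1)
  simpa using this

/-- pairs (a,b) ↦ (j,k) = (a+b+2, b+1) parametrizing j > k ≥ 1 -/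
def e1 : ℕ × ℕ ≃ {q : ℕ × ℕ // q.2 < q.1 ∧ 0 < q.2} where
  toFun p := ⟨(p.1 + p.2 + 2, p.2 + 1), by omega⟩
  invFun q := (q.1.1 - q.1.2 - 1, q.1.2 - 1)
  left_inv p := by
    obtain ⟨a, b⟩ := p
    simp only [Prod.mk.injEq]
    omega
  right_inv q := by
    obtain ⟨⟨j, k⟩, h1, h2⟩ := q
    simp only [Subtype.mk.injEq, Prod.mk.injEq]
    omega

/-- sigma-parametrization: (n, i) ↦ (j,k) = (n+2, i+1), i ≤ n -/
def e2 : (Σ n : ℕ, Fin (n+1)) ≃ {q : ℕ × ℕ // q.2 < q.1 ∧ 0 < q.2} where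
  toFun s := ⟨(s.1 + 2, s.2.1 + 1), by have := s.2.isLt; omega⟩
  invFun q := ⟨q.1.1 - 2, ⟨q.1.2 - 1, by obtain ⟨⟨j,k⟩,h1,h2⟩ := q; simp; omega⟩⟩
  left_inv s := by
    obtain ⟨n, i⟩ := s
    simp
  right_inv q := by
    obtain ⟨⟨j, k⟩, h1, h2⟩ := q
    simp only [Subtype.mk.injEq, Prod.mk.injEq]
    omega

lemma e1_apply (a b : ℕ) : (e1 (a,b) : ℕ × ℕ) = (a+b+2, b+1) := rfl
lemma e2_apply (n : ℕ) (i : Fin (n+1)) : (e2 ⟨n,i⟩ : ℕ × ℕ) = (n+2, i.1+1) := rfl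

/-- the double zeta sum in `ℝ≥0∞`, parametrized over `ℕ × ℕ` -/
noncomputable def SE : ℝ≥0∞ :=
  ∑' p : ℕ × ℕ, ENNReal.ofReal (1/((((p.1:ℝ))+p.2+2)^2 * ((p.2:ℝ)+1)))

/-- the zeta(3) sum in `ℝ≥0∞` -/
noncomputable def ZE : ℝ≥0∞ := ∑' m : ℕ, ENNReal.ofReal (1/((m:ℝ)+1)^3)

/-- SE as the sum over the subtype -/
lemma SE_eq_subtype :
    (∑' p : {q : ℕ × ℕ // q.2 < q.1 ∧ 0 < q.2},
      ENNReal.ofReal (1/(((p:ℕ×ℕ).1:ℝ)^2 * ((p:ℕ×ℕ).2:ℝ)))) = SE := by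
  rw [← e1.tsum_eq]
  apply tsum_congr
  intro p
  obtain ⟨a, b⟩ := p
  rw [e1_apply]
  congr 1
  push_cast
  ring_nf

/-- SE via the sigma parametrization: `∑_n harm(n+1)/(n+2)^2` -/
lemma SE_eq_V : SE = ∑' n : ℕ, ENNReal.ofReal (harm (n+1)/((n:ℝ)+2)^2) := by
  rw [← SE_eq_subtype, ← e2.tsum_eq, ENNReal.tsum_sigma']
  apply tsum_congr
  intro n
  rw [tsum_fintype]
  have hcongr : ∀ i : Fin (n+1),
      ENNReal.ofReal (1/((((e2 ⟨n,i⟩ : ℕ×ℕ).1:ℝ))^2 * ((e2 ⟨n,i⟩ : ℕ×ℕ).2:ℝ)))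
      = ENNReal.ofReal ((1/((n:ℝ)+2)^2) * (1/((i:ℝ)+1))) := by
    intro i
    rw [e2_apply]
    congr 1
    push_cast
    rw [div_mul_div_comm, one_mul]
  rw [Finset.sum_congr rfl fun i _ => hcongr i,
    ← ENNReal.ofReal_sum_of_nonneg (fun i _ => by positivity)]
  congr 1
  rw [← Finset.mul_sum, Fin.sum_univ_eq_sum_range (fun i => 1/((i:ℝ)+1)) (n+1), ← harm,
    div_mul_eq_mul_div, one_mul]

lemma real_sym (a b : ℕ) :
    1/(((a:ℝ)+b+2)^2 * ((b:ℝ)+1)) + 1/(((b:ℝ)+a+2)^2 * ((a:ℝ)+1))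
      = 1/(((a:ℝ)+1)*((b:ℝ)+1)*((a:ℝ)+b+2)) := by
  have h1 : ((a:ℝ)+1) ≠ 0 := by positivity
  have h2 : ((b:ℝ)+1) ≠ 0 := by positivity
  have h3 : ((a:ℝ)+b+2) ≠ 0 := by positivity
  have h4 : ((b:ℝ)+a+2) = ((a:ℝ)+b+2) := by ring
  rw [h4]
  field_simp
  ring

lemma two_SE : SE + SE = ∑' b : ℕ, ENNReal.ofReal (harm (b+1)/((b:ℝ)+1)^2) := by
  have hswap : (∑' p : ℕ × ℕ,
      ENNReal.ofReal (1/((((p.2:ℝ))+p.1+2)^2 * ((p.1:ℝ)+1)))) = SE := by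
    exact (Equiv.prodComm ℕ ℕ).tsum_eq
      (fun p : ℕ × ℕ => ENNReal.ofReal (1/((((p.1:ℝ))+p.2+2)^2 * ((p.2:ℝ)+1))))
  have step1 : SE + SE
      = ∑' p : ℕ × ℕ, ENNReal.ofReal (1/(((p.1:ℝ)+1)*((p.2:ℝ)+1)*((p.1:ℝ)+p.2+2))) := by
    nth_rewrite 2 [← hswap]
    rw [SE, ← ENNReal.tsum_add]
    apply tsum_congr
    intro p
    rw [← ENNReal.ofReal_add (by positivity) (by positivity), real_sym]
  rw [step1, ENNReal.tsum_prod']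
  apply tsum_congr
  intro a
  have hpt : ∀ b : ℕ,
      ENNReal.ofReal (1/(((a:ℝ)+1)*((b:ℝ)+1)*((a:ℝ)+b+2)))
      = ENNReal.ofReal ((1/((a:ℝ)+1)) * (1/(((b:ℝ)+1)*((b:ℝ)+a+2)))) := by
    intro b
    congr 1
    rw [div_mul_div_comm, one_mul]
    congr 1
    ring
  have hs := (hasSum_harm a).mul_left (1/((a:ℝ)+1))
  calc ∑' b : ℕ, ENNReal.ofReal (1/(((a:ℝ)+1)*((b:ℝ)+1)*((a:ℝ)+b+2)))
      = ∑' b : ℕ, ENNReal.ofReal ((1/((a:ℝ)+1)) * (1/(((b:ℝ)+1)*((b:ℝ)+a+2)))) :=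
        tsum_congr hpt
    _ = ENNReal.ofReal ((1/((a:ℝ)+1)) * (harm (a+1)/((a:ℝ)+1))) := by
        rw [← ENNReal.ofReal_tsum_of_nonneg (fun b => by positivity) hs.summable, hs.tsum_eq]
    _ = ENNReal.ofReal (harm (a+1)/((a:ℝ)+1)^2) := by
        congr 1
        rw [div_mul_div_comm, one_mul, sq]

lemma summable_shift (p : ℕ) (hp : 1 < p) : Summable (fun b : ℕ => 1/((b:ℝ)+1)^p) := by
  have h0 := Real.summable_one_div_nat_pow.mpr hp
  have := (summable_nat_add_iff 1).mpr h0
  apply this.congr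
  intro b
  push_cast
  ring_nf

lemma SE_ne_top : SE ≠ ⊤ := by
  have hb : SE ≤ ∑' b : ℕ, ENNReal.ofReal (1/((b:ℝ)+1)^2) := by
    rw [SE, ENNReal.tsum_prod', ENNReal.tsum_comm]
    apply ENNReal.tsum_le_tsum
    intro b
    have hs := (hasSum_tail b).mul_left (1/((b:ℝ)+1))
    calc ∑' a : ℕ, ENNReal.ofReal (1/(((a:ℝ)+b+2)^2*((b:ℝ)+1)))
        ≤ ∑' a : ℕ, ENNReal.ofReal ((1/((b:ℝ)+1)) * (1/(((a:ℝ)+b+1)*((a:ℝ)+b+2)))) := by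
          apply ENNReal.tsum_le_tsum
          intro a
          apply ENNReal.ofReal_le_ofReal
          rw [div_mul_div_comm, one_mul]
          apply one_div_le_one_div_of_le (by positivity)
          have hb1 : (0:ℝ) ≤ (b:ℝ) + 1 := by positivity
          nlinarith [Nat.cast_nonneg (α := ℝ) a, Nat.cast_nonneg (α := ℝ) b]
      _ = ENNReal.ofReal ((1/((b:ℝ)+1)) * (1/((b:ℝ)+1))) := by
          rw [← ENNReal.ofReal_tsum_of_nonneg (fun a => by positivity) hs.summable, hs.tsum_eq]
      _ = ENNReal.ofReal (1/((b:ℝ)+1)^2) := by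
          congr 1
          rw [div_mul_div_comm, one_mul, sq]
  have hfin : (∑' b : ℕ, ENNReal.ofReal (1/((b:ℝ)+1)^2)) ≠ ⊤ := by
    rw [← ENNReal.ofReal_tsum_of_nonneg (fun b => by positivity)
      (summable_shift 2 (by norm_num))]
    exact ENNReal.ofReal_ne_top
  exact ne_top_of_le_ne_top hfin hb

lemma harm_one : harm 1 = 1 := by simp [harm]

lemma U_split : (∑' b : ℕ, ENNReal.ofReal (harm (b+1)/((b:ℝ)+1)^2)) = SE + ZE := by
  have hz : ZE = ENNReal.ofReal 1 + ∑' n : ℕ, ENNReal.ofReal (1/((n:ℝ)+2)^3) := by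
    rw [ZE, tsum_eq_zero_add' ENNReal.summable]
    congr 1
    · norm_num
    · apply tsum_congr
      intro n
      congr 1
      push_cast
      ring_nf
  rw [tsum_eq_zero_add' ENNReal.summable, SE_eq_V, hz]
  have hterm : ∀ n : ℕ,
      ENNReal.ofReal (harm (n+1+1)/(((n+1:ℕ):ℝ)+1)^2)
      = ENNReal.ofReal (harm (n+1)/((n:ℝ)+2)^2) + ENNReal.ofReal (1/((n:ℝ)+2)^3) := by
    intro n
    rw [← ENNReal.ofReal_add (div_nonneg (harm_nonneg _) (by positivity)) (by positivity)]
    congr 1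
    rw [harm_succ (n+1)]
    push_cast
    rw [add_div]
    congr 1
    · ring_nf
    · rw [div_div]
      congr 1
      ring
  rw [tsum_congr hterm, ENNReal.tsum_add]
  have h1 : ENNReal.ofReal (harm (0+1)/(((0:ℕ):ℝ)+1)^2) = ENNReal.ofReal 1 := by
    norm_num [harm_one]
  rw [h1]
  ring

/-- `ζ(3) = ζ(2,1)`. -/
theorem zeta_three_eq_dzeta_two_one : rzeta 3 = dzeta 2 1 := by
  have key : SE = ZE := by
    have h := two_SE
    rw [U_split] at h
    exact (ENNReal.add_right_inj SE_ne_top).mp h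
  have hz_nonneg : ∀ m : ℕ, (0:ℝ) ≤ 1/((m:ℝ)+1)^3 := fun m => by positivity
  have hzsum : Summable (fun m : ℕ => 1/((m:ℝ)+1)^3) := summable_shift 3 (by norm_num)
  have hZE : ZE = ENNReal.ofReal (rzeta 3) := by
    rw [ZE, rzeta, ENNReal.ofReal_tsum_of_nonneg hz_nonneg hzsum]
  have hrz : rzeta 3 = ZE.toReal := by
    rw [hZE]
    exact (ENNReal.toReal_ofReal (by rw [rzeta]; exact tsum_nonneg hz_nonneg)).symm
  have hd : dzeta 2 1 = SE.toReal := by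
    rw [← SE_eq_subtype, ENNReal.tsum_toReal_eq (fun p => ENNReal.ofReal_ne_top), dzeta]
    apply tsum_congr
    intro p
    rw [pow_one, ENNReal.toReal_ofReal (by positivity)]
  rw [hrz, hd, key]
end

section
/- ζ(3,1) = π⁴/360, i.e. ∑_{j>k≥1} 1/(j³k) = π⁴/360. -/
open scoped BigOperators

open Real

noncomputable def f22 : ℕ × ℕ → ℝ := fun p => 1 / (((p.1 : ℝ) + p.2 + 2) ^ 2 * ((p.2 : ℝ) + 1) ^ 2)
noncomputable def f31 : ℕ × ℕ → ℝ := fun p => 1 / (((p.1 : ℝ) + p.2 + 2) ^ 3 * ((p.2 : ℝ) + 1))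
noncomputable def gg : ℕ × ℕ → ℝ := fun p => (1 / ((p.1 : ℝ) + 1) ^ 2) * (1 / ((p.2 : ℝ) + 1) ^ 2)

lemma hasSum_shift2 : HasSum (fun n : ℕ => 1 / ((n : ℝ) + 1) ^ 2) (π ^ 2 / 6) := by
  have h := (hasSum_nat_add_iff (f := fun n : ℕ => 1 / (n : ℝ) ^ 2) 1).2 (by simpa using hasSum_zeta_two)
  simpa [add_comm] using h

lemma hasSum_shift4 : HasSum (fun n : ℕ => 1 / ((n : ℝ) + 1) ^ 4) (π ^ 4 / 90) := by
  have h := (hasSum_nat_add_iff (f := fun n : ℕ => 1 / (n : ℝ) ^ 4) 1).2 (by simpa using hasSum_zeta_four)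
  simpa [add_comm] using h

set_option maxHeartbeats 1000000 in
lemma summable_gg : Summable gg := by
  have hnn : (0 : ℕ → ℝ) ≤ fun n : ℕ => 1 / ((n : ℝ) + 1) ^ 2 := fun n => by positivity
  have h : Summable fun x : ℕ × ℕ => (1 / ((x.1 : ℝ) + 1) ^ 2) * (1 / ((x.2 : ℝ) + 1) ^ 2) :=
    hasSum_shift2.summable.mul_of_nonneg hasSum_shift2.summable hnn hnn
  exact h

set_option maxHeartbeats 1000000 in
lemma hasSum_gg : HasSum gg (π ^ 2 / 6 * (π ^ 2 / 6)) := by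
  have h : HasSum (fun x : ℕ × ℕ => (1 / ((x.1 : ℝ) + 1) ^ 2) * (1 / ((x.2 : ℝ) + 1) ^ 2))
      (π ^ 2 / 6 * (π ^ 2 / 6)) := hasSum_shift2.mul hasSum_shift2 summable_gg
  exact h

lemma f31_le (p : ℕ × ℕ) : f31 p ≤ gg p := by
  obtain ⟨a, b⟩ := p
  have ha : (0:ℝ) ≤ a := Nat.cast_nonneg a
  have hb : (0:ℝ) ≤ b := Nat.cast_nonneg b
  simp only [f31, gg]
  rw [div_mul_div_comm, one_mul]
  apply one_div_le_one_div_of_le (by positivity)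
  nlinarith [sq_nonneg ((a:ℝ)+1), sq_nonneg ((b:ℝ)+1), mul_nonneg ha hb]

lemma f22_le (p : ℕ × ℕ) : f22 p ≤ gg p := by
  obtain ⟨a, b⟩ := p
  have ha : (0:ℝ) ≤ a := Nat.cast_nonneg a
  have hb : (0:ℝ) ≤ b := Nat.cast_nonneg b
  simp only [f22, gg]
  rw [div_mul_div_comm, one_mul]
  apply one_div_le_one_div_of_le (by positivity)
  nlinarith [sq_nonneg ((b:ℝ)+1), mul_nonneg ha hb]

lemma summable_f31 : Summable f31 :=
  Summable.of_nonneg_of_le (fun p => by unfold f31; positivity) f31_le summable_gg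

lemma summable_f22 : Summable f22 :=
  Summable.of_nonneg_of_le (fun p => by unfold f22; positivity) f22_le summable_gg

def eGT : ℕ × ℕ ≃ ↥{p : ℕ × ℕ | p.2 < p.1} where
  toFun p := ⟨(p.1 + p.2 + 1, p.2), by simp [Set.mem_setOf_eq]⟩
  invFun q := (q.1.1 - q.1.2 - 1, q.1.2)
  left_inv := by rintro ⟨a, b⟩; simp; omega
  right_inv := by rintro ⟨⟨m, n⟩, h⟩; simp only [Set.mem_setOf_eq] at h; exact Subtype.ext (by simp; omega)

def eLT : ℕ × ℕ ≃ ↥{p : ℕ × ℕ | p.1 < p.2} where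
  toFun p := ⟨(p.2, p.1 + p.2 + 1), by simp [Set.mem_setOf_eq]⟩
  invFun q := (q.1.2 - q.1.1 - 1, q.1.1)
  left_inv := by rintro ⟨a, b⟩; simp; omega
  right_inv := by rintro ⟨⟨m, n⟩, h⟩; simp only [Set.mem_setOf_eq] at h; exact Subtype.ext (by simp; omega)

def eDiag : ℕ ≃ ↥{p : ℕ × ℕ | p.1 = p.2} where
  toFun n := ⟨(n, n), rfl⟩
  invFun q := q.1.1
  left_inv := by intro n; rfl
  right_inv := by rintro ⟨⟨m, n⟩, h⟩; simp only [Set.mem_setOf_eq] at h; exact Subtype.ext (by simp; omega)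

def e31 : ℕ × ℕ ≃ {q : ℕ × ℕ // q.2 < q.1 ∧ 0 < q.2} where
  toFun p := ⟨(p.1 + p.2 + 2, p.2 + 1), by omega, by omega⟩
  invFun q := (q.1.1 - q.1.2 - 1, q.1.2 - 1)
  left_inv := by rintro ⟨a, b⟩; simp; omega
  right_inv := by rintro ⟨⟨m, n⟩, h1, h2⟩; exact Subtype.ext (by simp; omega)

lemma tsum_gt : ∑' (x : ↥{p : ℕ × ℕ | p.2 < p.1}), gg x = ∑' p, f22 p := by
  rw [← eGT.tsum_eq]
  apply tsum_congr
  rintro ⟨a, b⟩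
  simp only [eGT, Equiv.coe_fn_mk, gg, f22]
  rw [div_mul_div_comm, one_mul]
  push_cast
  ring_nf

lemma tsum_lt : ∑' (x : ↥{p : ℕ × ℕ | p.1 < p.2}), gg x = ∑' p, f22 p := by
  rw [← eLT.tsum_eq]
  apply tsum_congr
  rintro ⟨a, b⟩
  simp only [eLT, Equiv.coe_fn_mk, gg, f22]
  rw [div_mul_div_comm, one_mul]
  push_cast
  ring_nf

lemma tsum_diag : ∑' (x : ↥{p : ℕ × ℕ | p.1 = p.2}), gg x = π ^ 4 / 90 := by
  rw [← eDiag.tsum_eq]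
  rw [← hasSum_shift4.tsum_eq]
  apply tsum_congr
  intro n
  simp only [eDiag, Equiv.coe_fn_mk, gg]
  rw [div_mul_div_comm, one_mul]
  ring_nf

lemma stuffle : ∑' p, gg p = 2 * (∑' p, f22 p) + π ^ 4 / 90 := by
  have h1 := Summable.tsum_add_tsum_compl (f := gg) (s := {p : ℕ × ℕ | p.2 < p.1})
    (summable_gg.subtype _) (summable_gg.subtype _)
  have hcompl : ({p : ℕ × ℕ | p.2 < p.1})ᶜ = {p : ℕ × ℕ | p.1 < p.2} ∪ {p : ℕ × ℕ | p.1 = p.2} := by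
    ext ⟨a, b⟩
    simp only [Set.mem_compl_iff, Set.mem_setOf_eq, Set.mem_union, not_lt]
    omega
  rw [hcompl] at h1
  have hdisj : Disjoint {p : ℕ × ℕ | p.1 < p.2} {p : ℕ × ℕ | p.1 = p.2} := by
    rw [Set.disjoint_left]
    rintro ⟨a, b⟩ h1 h2
    simp only [Set.mem_setOf_eq] at h1 h2
    omega
  rw [Summable.tsum_union_disjoint hdisj (summable_gg.subtype _) (summable_gg.subtype _)] at h1
  rw [tsum_gt, tsum_lt, tsum_diag] at h1
  linarith

lemma summable_f22_swap : Summable fun p : ℕ × ℕ => f22 p.swap :=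
  (Equiv.prodComm ℕ ℕ).summable_iff.mpr summable_f22

lemma summable_f31_swap : Summable fun p : ℕ × ℕ => f31 p.swap :=
  (Equiv.prodComm ℕ ℕ).summable_iff.mpr summable_f31

lemma gg_eq (p : ℕ × ℕ) :
    gg p = (f22 p + f22 p.swap) + (2 * f31 p + 2 * f31 p.swap) := by
  obtain ⟨a, b⟩ := p
  have ha : (0:ℝ) < (a:ℝ) + 1 := by positivity
  have hb : (0:ℝ) < (b:ℝ) + 1 := by positivity
  have hs : (0:ℝ) < (a:ℝ) + b + 2 := by positivity
  simp only [gg, f22, f31, Prod.swap_prod_mk]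
  field_simp
  ring

lemma pfrac : ∑' p, gg p = 2 * (∑' p, f22 p) + 4 * (∑' p, f31 p) := by
  calc ∑' p, gg p
      = ∑' p : ℕ × ℕ, ((f22 p + f22 p.swap) + (2 * f31 p + 2 * f31 p.swap)) := tsum_congr gg_eq
    _ = (∑' p : ℕ × ℕ, (f22 p + f22 p.swap)) + ∑' p : ℕ × ℕ, (2 * f31 p + 2 * f31 p.swap) := by
        exact Summable.tsum_add (summable_f22.add summable_f22_swap)
          ((summable_f31.mul_left 2).add (summable_f31_swap.mul_left 2))
    _ = ((∑' p, f22 p) + ∑' p : ℕ × ℕ, f22 p.swap)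
        + ((∑' p : ℕ × ℕ, 2 * f31 p) + ∑' p : ℕ × ℕ, 2 * f31 p.swap) := by
        rw [Summable.tsum_add summable_f22 summable_f22_swap,
          Summable.tsum_add (summable_f31.mul_left 2) (summable_f31_swap.mul_left 2)]
    _ = 2 * (∑' p, f22 p) + 4 * (∑' p, f31 p) := by
        have h22 : ∑' p : ℕ × ℕ, f22 p.swap = ∑' p, f22 p := (Equiv.prodComm ℕ ℕ).tsum_eq f22
        have h31 : ∑' p : ℕ × ℕ, f31 p.swap = ∑' p, f31 p := (Equiv.prodComm ℕ ℕ).tsum_eq f31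
        rw [h22, tsum_mul_left, tsum_mul_left, h31]
        ring


lemma dzeta31_eq : dzeta 3 1 = ∑' p, f31 p := by
  rw [dzeta, ← e31.tsum_eq]
  apply tsum_congr
  rintro ⟨a, b⟩
  simp only [e31, Equiv.coe_fn_mk, f31]
  push_cast
  ring_nf

/-- `ζ(3,1) = π⁴/360`. -/
theorem dzeta_three_one : dzeta 3 1 = Real.pi ^ 4 / 360 := by
  have h1 := stuffle
  have h2 := pfrac
  rw [dzeta31_eq]
  linarith
end

section
/- ζ(5,1) = (5/2)ζ(6) − (1/2)ζ(3)² − ζ(2)ζ(4). -/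
open scoped BigOperators

namespace DzetaAux

open Finset Filter Topology

noncomputable def fz (n m : ℕ) : ℝ := 1 / ((m:ℝ)+1)^n

noncomputable def gz (r s : ℕ) (p : ℕ × ℕ) : ℝ :=
  1 / (((p.1:ℝ)+(p.2:ℝ)+2)^r * ((p.1:ℝ)+1)^s)

noncomputable def Tf (p : ℕ × ℕ) : ℝ :=
  1 / (((p.1:ℝ)+1)^4 * ((p.1:ℝ)+(p.2:ℝ)+2) * ((p.2:ℝ)+1))

noncomputable def Gf (p : ℕ × ℕ) : ℝ :=
  1 / (((p.1:ℝ)+(p.2:ℝ)+2)^5 * ((p.2:ℝ)+1))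

lemma fz_nonneg (n m : ℕ) : 0 ≤ fz n m := by unfold fz; positivity

lemma summable_fz {n : ℕ} (hn : 2 ≤ n) : Summable (fz n) := by
  have h0 : Summable (fun m : ℕ => 1 / (m:ℝ) ^ n) := Real.summable_one_div_nat_pow.2 hn
  have h1 := (summable_nat_add_iff (f := fun m : ℕ => 1 / (m:ℝ) ^ n) 1).2 h0
  refine h1.congr fun m => ?_
  unfold fz; push_cast; ring_nf

lemma base_summable : Summable (fun p : ℕ × ℕ => fz 2 p.1 * fz 2 p.2) :=
  (summable_fz le_rfl).mul_of_nonneg (summable_fz le_rfl)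
    (fun _ => fz_nonneg _ _) (fun _ => fz_nonneg _ _)

lemma summable_of_le_base {F : ℕ × ℕ → ℝ} (h0 : ∀ p, 0 ≤ F p)
    (h : ∀ p : ℕ × ℕ, F p ≤ fz 2 p.1 * fz 2 p.2) : Summable F :=
  Summable.of_nonneg_of_le h0 h base_summable

lemma base_prod (p : ℕ × ℕ) : fz 2 p.1 * fz 2 p.2 = 1 / (((p.1:ℝ)+1)^2 * ((p.2:ℝ)+1)^2) := by
  unfold fz; rw [div_mul_div_comm, one_mul]

lemma hx1 (m : ℕ) : (1:ℝ) ≤ (m:ℝ) + 1 := by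
  have : (0:ℝ) ≤ (m:ℝ) := Nat.cast_nonneg m
  linarith

lemma base_le {x y : ℝ} (hx : 1 ≤ x) (hy : 1 ≤ y) {r s : ℕ} (hr : 2 ≤ r) (h4 : 4 ≤ r + s) :
    x^2*y^2 ≤ (x+y)^r * x^s := by
  have hx0 : (0:ℝ) ≤ x := by linarith
  have hy0 : (0:ℝ) ≤ y := by linarith
  have h1 : x^(r-2) ≤ (x+y)^(r-2) := pow_le_pow_left₀ hx0 (by linarith) _
  have h2 : y^2 ≤ (x+y)^2 := pow_le_pow_left₀ hy0 (by linarith) _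
  have h3 : x^2 ≤ x^(r-2+s) := pow_le_pow_right₀ hx (by omega)
  calc x^2*y^2 ≤ x^(r-2+s) * y^2 :=
        mul_le_mul_of_nonneg_right h3 (sq_nonneg y)
    _ = (x^(r-2) * x^s) * y^2 := by rw [pow_add]
    _ ≤ ((x+y)^(r-2) * x^s) * (x+y)^2 := by
        refine mul_le_mul (mul_le_mul_of_nonneg_right h1 (by positivity)) h2 (sq_nonneg y) ?_
        positivity
    _ = ((x+y)^(r-2) * (x+y)^2) * x^s := by ring
    _ = (x+y)^r * x^s := by rw [← pow_add]; congr 2; omega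

lemma summable_gz {r s : ℕ} (hr : 2 ≤ r) (h4 : 4 ≤ r + s) : Summable (gz r s) := by
  refine summable_of_le_base (fun p => by unfold gz; positivity) (fun p => ?_)
  rw [base_prod]
  unfold gz
  apply one_div_le_one_div_of_le (by positivity)
  have := base_le (hx1 p.1) (hx1 p.2) hr h4
  calc ((p.1:ℝ)+1)^2*((p.2:ℝ)+1)^2 ≤ (((p.1:ℝ)+1)+((p.2:ℝ)+1))^r * ((p.1:ℝ)+1)^s := this
    _ = ((p.1:ℝ)+(p.2:ℝ)+2)^r * ((p.1:ℝ)+1)^s := by ring_nf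

lemma summable_Tf : Summable Tf := by
  refine summable_of_le_base (fun p => by unfold Tf; positivity) (fun p => ?_)
  rw [base_prod]
  unfold Tf
  apply one_div_le_one_div_of_le (by positivity)
  have hx := hx1 p.1; have hy := hx1 p.2
  set x := (p.1:ℝ)+1; set y := (p.2:ℝ)+1
  have e : (p.1:ℝ)+(p.2:ℝ)+2 = x + y := by simp [x, y]; ring
  rw [e]
  have hxx : x^2 ≤ x^4 := pow_le_pow_right₀ hx (by norm_num)
  calc x^2*y^2 = x^2 * y * y := by ring
    _ ≤ x^4 * (x+y) * y := by
        refine mul_le_mul_of_nonneg_right ?_ (by linarith)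
        exact mul_le_mul hxx (by linarith) (by linarith) (by positivity)
    _ = x^4 * (x+y) * y := by ring

lemma summable_Gf : Summable Gf := by
  refine summable_of_le_base (fun p => by unfold Gf; positivity) (fun p => ?_)
  rw [base_prod]
  unfold Gf
  apply one_div_le_one_div_of_le (by positivity)
  have hx := hx1 p.1; have hy := hx1 p.2
  set x := (p.1:ℝ)+1; set y := (p.2:ℝ)+1
  have e : (p.1:ℝ)+(p.2:ℝ)+2 = x + y := by simp [x, y]; ring
  rw [e]
  have h1 : x^2*y^2 ≤ (x+y)^2*(x+y)^2 := by
    have a1 : x^2 ≤ (x+y)^2 := by nlinarith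
    have a2 : y^2 ≤ (x+y)^2 := by nlinarith
    exact mul_le_mul a1 a2 (sq_nonneg y) (by positivity)
  have h2 : (1:ℝ) ≤ (x+y)*y := by nlinarith
  calc x^2*y^2 ≤ (x+y)^2*(x+y)^2 := h1
    _ = (x+y)^4 * 1 := by ring
    _ ≤ (x+y)^4 * ((x+y)*y) := mul_le_mul_of_nonneg_left h2 (by positivity)
    _ = (x+y)^5*y := by ring

/-! ### Equivs -/

def eD : ℕ × ℕ ≃ {q : ℕ × ℕ // q.2 < q.1 ∧ 0 < q.2} where
  toFun p := ⟨(p.2 + p.1 + 2, p.1 + 1), by omega⟩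
  invFun q := (q.1.2 - 1, q.1.1 - q.1.2 - 1)
  left_inv p := by obtain ⟨b, a⟩ := p; simp; omega
  right_inv q := by
    obtain ⟨⟨j, k⟩, h⟩ := q
    obtain ⟨h1, h2⟩ := h
    simp only [Subtype.mk.injEq, Prod.mk.injEq, true_and, and_true]
    omega

def eU : ℕ × ℕ ≃ {p : ℕ × ℕ | p.2 < p.1} where
  toFun p := ⟨(p.2 + p.1 + 1, p.1), by simp only [Set.mem_setOf_eq]; omega⟩
  invFun q := (q.1.2, q.1.1 - q.1.2 - 1)
  left_inv p := by obtain ⟨b, a⟩ := p; simp; omega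
  right_inv q := by
    obtain ⟨⟨j, k⟩, h⟩ := q
    simp only [Set.mem_setOf_eq] at h
    simp only [Subtype.mk.injEq, Prod.mk.injEq, true_and, and_true]
    omega

def eV : ℕ × ℕ ≃ ↥({p : ℕ × ℕ | p.2 < p.1}ᶜ) where
  toFun p := ⟨(p.2, p.2 + p.1), by simp only [Set.mem_compl_iff, Set.mem_setOf_eq]; omega⟩
  invFun q := (q.1.2 - q.1.1, q.1.1)
  left_inv p := by obtain ⟨d, c⟩ := p; simp
  right_inv q := by
    obtain ⟨⟨i, j⟩, h⟩ := q
    simp only [Set.mem_compl_iff, Set.mem_setOf_eq, not_lt] at h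
    simp only [Subtype.mk.injEq, Prod.mk.injEq, true_and, and_true]
    omega

def eS : (Σ b : ℕ, Fin (b + 1)) ≃ {q : ℕ × ℕ // q.2 < q.1 ∧ 0 < q.2} where
  toFun σ := ⟨(σ.1 + 2, (σ.2 : ℕ) + 1), by have := σ.2.isLt; omega⟩
  invFun q := ⟨q.1.1 - 2, ⟨q.1.2 - 1, by have := q.2; omega⟩⟩
  left_inv σ := rfl
  right_inv q := by
    obtain ⟨⟨j, k⟩, h⟩ := q
    obtain ⟨h1, h2⟩ := h
    simp only [Subtype.mk.injEq, Prod.mk.injEq, true_and, and_true]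
    omega

/-! ### Harmonic numbers and telescoping -/

noncomputable def Hn (b : ℕ) : ℝ := ∑ i ∈ Finset.range b, 1/((i:ℝ)+1)

lemma Hn_nonneg (b : ℕ) : 0 ≤ Hn b := by
  unfold Hn; positivity

lemma Hn_le (b : ℕ) : Hn b ≤ (b:ℝ) := by
  unfold Hn
  calc ∑ i ∈ Finset.range b, 1/((i:ℝ)+1) ≤ ∑ i ∈ Finset.range b, 1 := by
        refine Finset.sum_le_sum fun i _ => ?_
        rw [div_le_one (by positivity)]
        exact hx1 i
    _ = (b:ℝ) := by simp

lemma tail_tendsto (k : ℕ) :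
    Tendsto (fun M : ℕ => ∑ i ∈ Finset.range (k+1), 1/((i:ℝ)+1+(M:ℝ))) atTop (𝓝 0) := by
  have h0 : (0:ℝ) = ∑ i ∈ Finset.range (k+1), (0:ℝ) := by simp
  rw [h0]
  refine tendsto_finset_sum _ (fun i _ => ?_)
  have h1 : Tendsto (fun M : ℕ => ((M:ℝ) + ((i:ℝ)+1))) atTop atTop :=
    tendsto_atTop_add_const_right _ _ tendsto_natCast_atTop_atTop
  have h2 := h1.inv_tendsto_atTop
  refine h2.congr fun M => ?_
  simp [Pi.inv_apply, one_div]
  ring_nf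

lemma partial_sum_eq (k : ℕ) (M : ℕ) :
    ∑ m ∈ Finset.range M, 1/(((m:ℝ)+1)*((m:ℝ)+1+((k:ℝ)+1)))
      = (Hn (k+1) - ∑ i ∈ Finset.range (k+1), 1/((i:ℝ)+1+(M:ℝ))) / ((k:ℝ)+1) := by
  induction M with
  | zero =>
      simp [Hn]
  | succ M ih =>
      rw [Finset.sum_range_succ, ih]
      have key : ∑ i ∈ Finset.range (k+1),
          (1/((i:ℝ)+1+(M:ℝ)) - 1/((i:ℝ)+1+((M:ℝ)+1)))
          = 1/(1+(M:ℝ)) - 1/(((k:ℝ)+1)+1+(M:ℝ)) := by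
        have h := Finset.sum_range_sub' (f := fun i : ℕ => 1/((i:ℝ)+1+(M:ℝ))) (n := k+1)
        simp only [Nat.cast_zero, Nat.cast_add, Nat.cast_one] at h
        calc ∑ i ∈ Finset.range (k+1), (1/((i:ℝ)+1+(M:ℝ)) - 1/((i:ℝ)+1+((M:ℝ)+1)))
            = ∑ i ∈ Finset.range (k+1), (1/((i:ℝ)+1+(M:ℝ)) - 1/(((i:ℝ)+1)+1+(M:ℝ))) := by
              refine Finset.sum_congr rfl fun i _ => by ring_nf
          _ = 1/((0:ℝ)+1+(M:ℝ)) - 1/(((k:ℝ)+1)+1+(M:ℝ)) := by rw [← h]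
          _ = 1/(1+(M:ℝ)) - 1/(((k:ℝ)+1)+1+(M:ℝ)) := by norm_num
      have hM : (0:ℝ) < (M:ℝ)+1 := by positivity
      have hK : (0:ℝ) < (k:ℝ)+1 := by positivity
      have hsplit : ∑ i ∈ Finset.range (k+1), 1/((i:ℝ)+1+((M:ℝ)+1))
          = ∑ i ∈ Finset.range (k+1), 1/((i:ℝ)+1+(M:ℝ))
            - (1/(1+(M:ℝ)) - 1/(((k:ℝ)+1)+1+(M:ℝ))) := by
        rw [← key]
        rw [Finset.sum_sub_distrib]
        ring
      have hcast : ((M+1 : ℕ):ℝ) = (M:ℝ)+1 := by push_cast; ring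
      rw [hcast, hsplit]
      field_simp
      ring

lemma telescope (k : ℕ) :
    HasSum (fun m : ℕ => 1/(((m:ℝ)+1)*((m:ℝ)+1+((k:ℝ)+1)))) (Hn (k+1) / ((k:ℝ)+1)) := by
  have hnn : ∀ m : ℕ, 0 ≤ 1/(((m:ℝ)+1)*((m:ℝ)+1+((k:ℝ)+1))) := fun m => by positivity
  rw [hasSum_iff_tendsto_nat_of_nonneg hnn]
  have h1 : Tendsto (fun M : ℕ => (Hn (k+1) - ∑ i ∈ Finset.range (k+1), 1/((i:ℝ)+1+(M:ℝ))) / ((k:ℝ)+1))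
      atTop (𝓝 (Hn (k+1) / ((k:ℝ)+1))) := by
    have := ((tendsto_const_nhds (x := Hn (k+1)) (f := atTop (α := ℕ))).sub (tail_tendsto k)).div_const ((k:ℝ)+1)
    simpa using this
  refine h1.congr fun M => ?_
  rw [partial_sum_eq]


/-! ### tsum identities -/

lemma rz_eq (n : ℕ) : rzeta n = ∑' m : ℕ, fz n m := rfl

lemma dz_eq (r s : ℕ) : dzeta r s = ∑' p : ℕ × ℕ, gz r s p := by
  rw [dzeta, ← eD.tsum_eq]
  refine (tsum_congr fun p => ?_).symm
  obtain ⟨b, a⟩ := p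
  simp only [eD, Equiv.coe_fn_mk, gz]
  push_cast
  ring_nf

lemma summable_dz_body {r s : ℕ} (hr : 2 ≤ r) (h4 : 4 ≤ r + s) :
    Summable (fun p : {q : ℕ × ℕ // q.2 < q.1 ∧ 0 < q.2} =>
      1 / (((p : ℕ × ℕ).1 : ℝ) ^ r * ((p : ℕ × ℕ).2 : ℝ) ^ s)) := by
  rw [← eD.summable_iff]
  refine (summable_gz hr h4).congr fun p => ?_
  obtain ⟨b, a⟩ := p
  simp only [eD, Equiv.coe_fn_mk, gz, Function.comp]
  push_cast
  ring_nf

lemma dz51_sigma : dzeta 5 1 = ∑' b : ℕ, Hn (b+1) * (1/((b:ℝ)+2)^5) := by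
  have hsum : Summable (fun σ : Σ b : ℕ, Fin (b+1) =>
      1 / ((((eS σ : {q : ℕ × ℕ // q.2 < q.1 ∧ 0 < q.2}) : ℕ × ℕ).1 : ℝ) ^ 5
        * (((eS σ : {q : ℕ × ℕ // q.2 < q.1 ∧ 0 < q.2}) : ℕ × ℕ).2 : ℝ) ^ 1)) :=
    eS.summable_iff.mpr (summable_dz_body (by norm_num) (by norm_num))
  calc dzeta 5 1
      = ∑' σ : Σ b : ℕ, Fin (b+1),
          1 / ((((eS σ : {q : ℕ × ℕ // q.2 < q.1 ∧ 0 < q.2}) : ℕ × ℕ).1 : ℝ) ^ 5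
            * (((eS σ : {q : ℕ × ℕ // q.2 < q.1 ∧ 0 < q.2}) : ℕ × ℕ).2 : ℝ) ^ 1) := by
        rw [dzeta, ← eS.tsum_eq]
    _ = ∑' b : ℕ, ∑' i : Fin (b+1),
          1 / ((((eS ⟨b, i⟩ : {q : ℕ × ℕ // q.2 < q.1 ∧ 0 < q.2}) : ℕ × ℕ).1 : ℝ) ^ 5
            * (((eS ⟨b, i⟩ : {q : ℕ × ℕ // q.2 < q.1 ∧ 0 < q.2}) : ℕ × ℕ).2 : ℝ) ^ 1) :=
        Summable.tsum_sigma' (fun b => (hasSum_fintype _).summable) hsum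
    _ = ∑' b : ℕ, Hn (b+1) * (1/((b:ℝ)+2)^5) := by
        refine tsum_congr fun b => ?_
        rw [tsum_fintype]
        have he : ∀ i : Fin (b+1),
            1 / ((((eS ⟨b, i⟩ : {q : ℕ × ℕ // q.2 < q.1 ∧ 0 < q.2}) : ℕ × ℕ).1 : ℝ) ^ 5
              * (((eS ⟨b, i⟩ : {q : ℕ × ℕ // q.2 < q.1 ∧ 0 < q.2}) : ℕ × ℕ).2 : ℝ) ^ 1)
            = (1/((b:ℝ)+2)^5) * (1/(((i:ℕ):ℝ)+1)) := by
          intro i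
          simp only [eS, Equiv.coe_fn_mk]
          push_cast
          try rw [pow_one, div_mul_div_comm, one_mul]
          try congr 1
          try push_cast
          try ring
        rw [Finset.sum_congr rfl (fun i _ => he i), ← Finset.mul_sum]
        rw [Fin.sum_univ_eq_sum_range (fun i : ℕ => 1/((i:ℝ)+1))]
        unfold Hn
        ring

lemma summable_HB : Summable (fun b : ℕ => Hn b * (1/((b:ℝ)+1)^5)) := by
  refine Summable.of_nonneg_of_le (fun b => by
      have := Hn_nonneg b; positivity)
    (fun b => ?_) (summable_fz (n := 4) (by norm_num))
  unfold fz
  have h1 : Hn b ≤ (b:ℝ) := Hn_le b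
  have h2 : (0:ℝ) < (b:ℝ)+1 := by positivity
  calc Hn b * (1/((b:ℝ)+1)^5) ≤ ((b:ℝ)+1) * (1/((b:ℝ)+1)^5) := by
        refine mul_le_mul_of_nonneg_right (by linarith) (by positivity)
    _ = 1/((b:ℝ)+1)^4 := by field_simp

lemma tsum_Tf : ∑' p : ℕ × ℕ, Tf p = (∑' b : ℕ, Hn b * (1/((b:ℝ)+1)^5)) + rzeta 6 := by
  rw [Summable.tsum_prod' summable_Tf summable_Tf.prod_factor]
  have inner : ∀ b : ℕ, ∑' a : ℕ, Tf (b, a) = Hn (b+1) * (1/((b:ℝ)+1)^5) := by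
    intro b
    have h := (telescope b).mul_left (1/((b:ℝ)+1)^4)
    have he : ∀ a : ℕ, Tf (b, a)
        = (1/((b:ℝ)+1)^4) * (1/(((a:ℝ)+1)*((a:ℝ)+1+((b:ℝ)+1)))) := by
      intro a
      unfold Tf
      dsimp only
      rw [div_mul_div_comm, one_mul]
      congr 1
      ring
    rw [tsum_congr he, (h.tsum_eq)]
    rw [div_mul_div_comm, one_mul, mul_one_div, ← pow_succ]
  rw [tsum_congr inner]
  have split : ∀ b : ℕ, Hn (b+1) * (1/((b:ℝ)+1)^5)
      = Hn b * (1/((b:ℝ)+1)^5) + fz 6 b := by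
    intro b
    unfold Hn fz
    rw [Finset.sum_range_succ]
    push_cast
    have hb : ((b:ℝ)+1) ≠ 0 := by positivity
    field_simp
  rw [tsum_congr split, Summable.tsum_add summable_HB (summable_fz (by norm_num))]
  rfl

lemma tsum_HB_eq : ∑' b : ℕ, Hn b * (1/((b:ℝ)+1)^5) = dzeta 5 1 := by
  rw [Summable.tsum_eq_zero_add summable_HB]
  have h0 : Hn 0 * (1/(((0:ℕ):ℝ)+1)^5) = 0 := by simp [Hn]
  rw [h0, zero_add, dz51_sigma]
  refine tsum_congr fun b => ?_
  push_cast
  ring_nf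

lemma tsum_Gf : ∑' p : ℕ × ℕ, Gf p = dzeta 5 1 := by
  rw [dz_eq 5 1, ← (Equiv.prodComm ℕ ℕ).tsum_eq (gz 5 1)]
  refine tsum_congr fun p => ?_
  obtain ⟨b, a⟩ := p
  simp only [Gf, gz, Equiv.prodComm, Equiv.coe_fn_mk, Prod.swap]
  ring_nf

lemma pointwise (p : ℕ × ℕ) :
    gz 5 1 p + gz 4 2 p + gz 3 3 p + gz 2 4 p + Gf p = Tf p := by
  obtain ⟨b, a⟩ := p
  unfold gz Gf Tf
  dsimp only
  have hx : (0:ℝ) < (b:ℝ)+1 := by positivity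
  have hy : (0:ℝ) < (a:ℝ)+1 := by positivity
  have hj : (0:ℝ) < (b:ℝ)+(a:ℝ)+2 := by positivity
  field_simp
  ring

lemma sum_formula : dzeta 4 2 + dzeta 3 3 + dzeta 2 4 + dzeta 5 1 = rzeta 6 := by
  have h51 := summable_gz (r:=5) (s:=1) (by norm_num) (by norm_num)
  have h42 := summable_gz (r:=4) (s:=2) (by norm_num) (by norm_num)
  have h33 := summable_gz (r:=3) (s:=3) (by norm_num) (by norm_num)
  have h24 := summable_gz (r:=2) (s:=4) (by norm_num) (by norm_num)
  have key : (∑' p : ℕ × ℕ, gz 5 1 p) + (∑' p : ℕ × ℕ, gz 4 2 p) + (∑' p : ℕ × ℕ, gz 3 3 p)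
      + (∑' p : ℕ × ℕ, gz 2 4 p) + (∑' p : ℕ × ℕ, Gf p) = ∑' p : ℕ × ℕ, Tf p := by
    rw [← Summable.tsum_add h51 h42, ← Summable.tsum_add (h51.add h42) h33,
      ← Summable.tsum_add ((h51.add h42).add h33) h24,
      ← Summable.tsum_add (((h51.add h42).add h33).add h24) summable_Gf]
    exact tsum_congr pointwise
  rw [← dz_eq 5 1, ← dz_eq 4 2, ← dz_eq 3 3, ← dz_eq 2 4, tsum_Gf, tsum_Tf, tsum_HB_eq] at key
  linarith

lemma stuffle {r s : ℕ} (hr : 2 ≤ r) (hs : 2 ≤ s) :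
    rzeta r * rzeta s = dzeta r s + dzeta s r + rzeta (r+s) := by
  have hfr := summable_fz hr
  have hfs := summable_fz hs
  have hW : Summable (fun p : ℕ × ℕ => fz r p.1 * fz s p.2) :=
    hfr.mul_of_nonneg hfs (fun _ => fz_nonneg _ _) (fun _ => fz_nonneg _ _)
  have hmul : rzeta r * rzeta s = ∑' p : ℕ × ℕ, fz r p.1 * fz s p.2 := by
    rw [rz_eq, rz_eq]; exact Summable.tsum_mul_tsum hfr hfs hW
  set U : Set (ℕ × ℕ) := {p : ℕ × ℕ | p.2 < p.1} with hUdef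
  have hsplit := Summable.tsum_add_tsum_compl (f := fun p : ℕ × ℕ => fz r p.1 * fz s p.2)
    (s := U) (hW.subtype U) (hW.subtype Uᶜ)
  have hUpart : ∑' q : U, fz r (q : ℕ × ℕ).1 * fz s (q : ℕ × ℕ).2 = dzeta r s := by
    rw [← eU.tsum_eq, dz_eq]
    refine tsum_congr fun p => ?_
    obtain ⟨b, a⟩ := p
    simp only [eU, Equiv.coe_fn_mk, fz, gz]
    push_cast
    ring_nf
  have hV : Summable (fun p : ℕ × ℕ => fz r p.2 * fz s (p.2 + p.1)) := by
    have h1 := eV.summable_iff.mpr (hW.subtype Uᶜ)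
    refine h1.congr fun p => ?_
    obtain ⟨d, c⟩ := p
    simp only [Function.comp, eV, Equiv.coe_fn_mk]
  have hVtrans : ∑' q : ↥Uᶜ, fz r (q : ℕ × ℕ).1 * fz s (q : ℕ × ℕ).2
      = ∑' p : ℕ × ℕ, fz r p.2 * fz s (p.2 + p.1) := by
    rw [← eV.tsum_eq]
    refine tsum_congr fun p => ?_
    obtain ⟨d, c⟩ := p
    simp only [eV, Equiv.coe_fn_mk]
  set F : ℕ → ℝ := fun d => ∑' c : ℕ, fz r c * fz s (c + d) with hFdef
  have hfib : ∀ d : ℕ, Summable (fun c : ℕ => fz r c * fz s (c + d)) := by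
    intro d
    have := hV.prod_factor d
    exact this
  have hF : Summable F :=
    (hV.hasSum.prod_fiberwise (fun d => (hfib d).hasSum)).summable
  have hprod : ∑' p : ℕ × ℕ, fz r p.2 * fz s (p.2 + p.1) = ∑' d : ℕ, F d := by
    rw [Summable.tsum_prod' hV hV.prod_factor]
  have hzero : F 0 = rzeta (r+s) := by
    rw [hFdef, rz_eq]
    refine tsum_congr fun c => ?_
    unfold fz
    rw [div_mul_div_comm, one_mul, Nat.add_zero, ← pow_add]
  have hVs : Summable (fun p : ℕ × ℕ => fz r p.2 * fz s (p.2 + p.1 + 1)) := by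
    refine summable_of_le_base (fun p => mul_nonneg (fz_nonneg _ _) (fz_nonneg _ _)) (fun p => ?_)
    rw [base_prod]
    obtain ⟨d, c⟩ := p
    unfold fz
    dsimp only
    rw [div_mul_div_comm, one_mul]
    apply one_div_le_one_div_of_le (by positivity)
    have hx := hx1 d
    have hy := hx1 c
    push_cast
    set x := (d:ℝ)+1
    set y := (c:ℝ)+1
    have hxy : ((c:ℝ) + (d:ℝ) + 1) + 1 = x + y := by simp [x, y]; ring
    have a1 : y^2 ≤ y^r := pow_le_pow_right₀ hy hr
    have a2 : x^2 ≤ (x+y)^2 := by nlinarith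
    have a3 : (x+y)^2 ≤ (x+y)^s := pow_le_pow_right₀ (by linarith) hs
    calc x^2*y^2 ≤ y^r * (x+y)^s := by
          rw [mul_comm (y^r)]
          exact mul_le_mul (a2.trans a3) a1 (sq_nonneg y) (by positivity)
      _ = y^r * (((c:ℝ) + (d:ℝ) + 1) + 1)^s := by rw [hxy]
  have htail : ∑' d : ℕ, F (d+1) = dzeta s r := by
    have step1 : ∀ d : ℕ, F (d+1) = ∑' c : ℕ, fz r c * fz s (c + d + 1) := by
      intro d
      rw [hFdef]
      refine tsum_congr fun c => ?_
      congr 1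
    rw [tsum_congr step1, ← Summable.tsum_prod' hVs hVs.prod_factor]
    rw [dz_eq, ← (Equiv.prodComm ℕ ℕ).tsum_eq (gz s r)]
    refine tsum_congr fun p => ?_
    obtain ⟨d, c⟩ := p
    simp only [Equiv.prodComm, Equiv.coe_fn_mk, Prod.swap, gz, fz]
    rw [div_mul_div_comm, one_mul]
    push_cast
    ring_nf
  have hdsum : ∑' d : ℕ, F d = rzeta (r+s) + dzeta s r := by
    rw [Summable.tsum_eq_zero_add hF, hzero, htail]
  rw [hmul, ← hsplit, hUpart, hVtrans, hprod, hdsum]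
  ring

end DzetaAux

/-- `ζ(5,1) = (5/2)ζ(6) − (1/2)ζ(3)² − ζ(2)ζ(4)`. -/
theorem dzeta_five_one :
    dzeta 5 1 = (5 / 2) * rzeta 6 - (1 / 2) * rzeta 3 ^ 2 - rzeta 2 * rzeta 4 := by
  have h33 := DzetaAux.stuffle (r := 3) (s := 3) (by norm_num) (by norm_num)
  have h24 := DzetaAux.stuffle (r := 2) (s := 4) (by norm_num) (by norm_num)
  have hsf := DzetaAux.sum_formula
  norm_num at h33 h24
  rw [sq]
  linarith
end

section
/- ζ(4,2) = ζ(3)² − (32/105)ζ(2)³, where ζ(4,2) = ∑_{j>k≥1} 1/(j⁴k²). -/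
set_option maxHeartbeats 1000000

open scoped BigOperators
open Real

/-- Tornheim-type summand: indices shifted so that `m n : ℕ` represent `m+1, n+1 ≥ 1`. -/
noncomputable def tf (a b c : ℕ) (p : ℕ × ℕ) : ℝ :=
  1 / (((p.1 : ℝ) + 1) ^ a * ((p.2 : ℝ) + 1) ^ b * ((p.1 : ℝ) + (p.2 : ℝ) + 2) ^ c)

/-- The Tornheim double sum `T(a,b,c) = ∑_{m,n ≥ 1} 1/(m^a n^b (m+n)^c)`. -/
noncomputable def T (a b c : ℕ) : ℝ := ∑' p : ℕ × ℕ, tf a b c p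

lemma tf_nonneg (a b c : ℕ) (p : ℕ × ℕ) : 0 ≤ tf a b c p := by
  unfold tf; positivity

lemma rz_summable {a : ℕ} (ha : 2 ≤ a) : Summable (fun m : ℕ => 1 / ((m : ℝ) + 1) ^ a) := by
  have S2 : Summable (fun m : ℕ => 1 / ((m : ℝ) + 1) ^ 2) := by
    have := (summable_nat_add_iff (f := fun n : ℕ => 1 / (n : ℝ) ^ 2) 1).2
      (Real.summable_one_div_nat_pow.2 one_lt_two)
    convert this using 2 with m
    · rfl
    push_cast
    ring_nf
  refine Summable.of_nonneg_of_le (fun m => by positivity) (fun m => ?_) S2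
  have h1 : (1:ℝ) ≤ (m:ℝ)+1 := by
    have := Nat.cast_nonneg (α := ℝ) m
    linarith
  exact one_div_le_one_div_of_le (by positivity) (pow_le_pow_right₀ h1 ha)

lemma tf_summable {a b c p q : ℕ} (hc : p + q = c) (ha : 2 ≤ a + p) (hb : 2 ≤ b + q) :
    Summable (tf a b c) := by
  have base : Summable (fun x : ℕ × ℕ => (1 / ((x.1 : ℝ) + 1) ^ 2) * (1 / ((x.2 : ℝ) + 1) ^ 2)) :=
    Summable.mul_of_nonneg (f := fun m : ℕ => 1 / ((m : ℝ) + 1) ^ 2)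
      (g := fun m : ℕ => 1 / ((m : ℝ) + 1) ^ 2) (rz_summable le_rfl) (rz_summable le_rfl)
      (fun m => by positivity) (fun n => by positivity)
  refine Summable.of_nonneg_of_le (tf_nonneg a b c) (fun x => ?_) base
  obtain ⟨m, n⟩ := x
  set M : ℝ := (m : ℝ) + 1 with hM
  set N : ℝ := (n : ℝ) + 1 with hN
  have hM1 : (1 : ℝ) ≤ M := by
    have := Nat.cast_nonneg (α := ℝ) m
    rw [hM]; linarith
  have hN1 : (1 : ℝ) ≤ N := by
    have := Nat.cast_nonneg (α := ℝ) n
    rw [hN]; linarith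
  have hMpos : (0 : ℝ) < M := lt_of_lt_of_le one_pos hM1
  have hNpos : (0 : ℝ) < N := lt_of_lt_of_le one_pos hN1
  have key : M ^ 2 * N ^ 2 ≤ M ^ a * N ^ b * ((m : ℝ) + (n : ℝ) + 2) ^ c := by
    have hS : (m : ℝ) + (n : ℝ) + 2 = M + N := by rw [hM, hN]; ring
    rw [hS, ← hc, pow_add]
    have h1 : M ^ p ≤ (M + N) ^ p := pow_le_pow_left₀ hMpos.le (by linarith) p
    have h2 : N ^ q ≤ (M + N) ^ q := pow_le_pow_left₀ hNpos.le (by linarith) q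
    have h3 : M ^ 2 ≤ M ^ (a + p) := pow_le_pow_right₀ hM1 ha
    have h4 : N ^ 2 ≤ N ^ (b + q) := pow_le_pow_right₀ hN1 hb
    calc M ^ 2 * N ^ 2 ≤ M ^ (a + p) * N ^ (b + q) := by
          apply mul_le_mul h3 h4 (by positivity) (by positivity)
      _ = (M ^ a * N ^ b) * (M ^ p * N ^ q) := by rw [pow_add, pow_add]; ring
      _ ≤ (M ^ a * N ^ b) * ((M + N) ^ p * (M + N) ^ q) := by
          apply mul_le_mul_of_nonneg_left _ (by positivity)
          exact mul_le_mul h1 h2 (by positivity) (by positivity)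
      _ = M ^ a * N ^ b * ((M + N) ^ p * (M + N) ^ q) := by ring
  unfold tf
  rw [div_mul_div_comm, one_mul]
  apply one_div_le_one_div_of_le (by positivity)
  simpa [hM, hN] using key

lemma tf_rec_pt (a b c : ℕ) (p : ℕ × ℕ) :
    tf (a + 1) (b + 1) c p = tf a (b + 1) (c + 1) p + tf (a + 1) b (c + 1) p := by
  obtain ⟨m, n⟩ := p
  unfold tf
  set M : ℝ := (m : ℝ) + 1 with hM
  set N : ℝ := (n : ℝ) + 1 with hN
  have hS : (m : ℝ) + (n : ℝ) + 2 = M + N := by rw [hM, hN]; ring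
  have hMpos : (0 : ℝ) < M := by positivity
  have hNpos : (0 : ℝ) < N := by positivity
  simp only [hS]
  have hSpos : (0 : ℝ) < M + N := by positivity
  rw [pow_succ M, pow_succ N, pow_succ (M + N)]
  field_simp

lemma T_rec {a b c : ℕ} (h1 : Summable (tf a (b + 1) (c + 1)))
    (h2 : Summable (tf (a + 1) b (c + 1))) :
    T (a + 1) (b + 1) c = T a (b + 1) (c + 1) + T (a + 1) b (c + 1) := by
  rw [T, T, T, ← Summable.tsum_add h1 h2]
  exact tsum_congr (tf_rec_pt a b c)

lemma T_symm (a b c : ℕ) : T a b c = T b a c := by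
  rw [T, T, ← (Equiv.prodComm ℕ ℕ).tsum_eq (tf b a c)]
  apply tsum_congr
  intro p
  unfold tf
  simp only [Equiv.prodComm_apply, Prod.fst_swap, Prod.snd_swap]
  congr 1
  ring

lemma norm_summable {a : ℕ} (ha : 2 ≤ a) :
    Summable (fun m : ℕ => ‖1 / ((m : ℝ) + 1) ^ a‖) := by
  refine (rz_summable ha).congr (fun m => ?_)
  rw [Real.norm_of_nonneg (by positivity)]

lemma T_fact {a b : ℕ} (ha : 2 ≤ a) (hb : 2 ≤ b) :
    T a b 0 = rzeta a * rzeta b := by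
  rw [T, rzeta, rzeta, tsum_mul_tsum_of_summable_norm (norm_summable ha) (norm_summable hb)]
  refine tsum_congr (fun p => ?_)
  unfold tf
  rw [pow_zero, mul_one, div_mul_div_comm, one_mul]

/-- `(d, k) ↦ (j, k+1)` with `j = k + d + 2 > k + 1`. -/
def eDz : ℕ × ℕ ≃ {q : ℕ × ℕ // q.2 < q.1 ∧ 0 < q.2} where
  toFun p := ⟨(p.2 + p.1 + 2, p.2 + 1), by omega⟩
  invFun q := (q.1.1 - q.1.2 - 1, q.1.2 - 1)
  left_inv p := by
    obtain ⟨d, k⟩ := p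
    simp only [Prod.mk.injEq]
    omega
  right_inv q := by
    obtain ⟨⟨j, k⟩, h⟩ := q
    simp only [Subtype.mk.injEq, Prod.mk.injEq]
    omega

lemma dz (r s : ℕ) :
    dzeta r s = ∑' p : ℕ × ℕ, 1 / (((p.1 : ℝ) + (p.2 : ℝ) + 2) ^ r * ((p.2 : ℝ) + 1) ^ s) := by
  rw [dzeta, ← eDz.tsum_eq]
  refine tsum_congr (fun p => ?_)
  obtain ⟨d, k⟩ := p
  simp only [eDz, Equiv.coe_fn_mk]
  push_cast
  ring_nf

lemma T_dz (b c : ℕ) : T 0 b c = dzeta c b := by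
  rw [T, dz]
  refine tsum_congr (fun p => ?_)
  unfold tf
  rw [pow_zero, one_mul, mul_comm]

def s₁ : Set (ℕ × ℕ) := {p | p.2 < p.1}
def s₂ : Set (ℕ × ℕ) := {p | p.1 < p.2}

def e₁ : ℕ × ℕ ≃ s₁ where
  toFun p := ⟨(p.2 + p.1 + 1, p.2), by simp [s₁]⟩
  invFun q := (q.1.1 - q.1.2 - 1, q.1.2)
  left_inv p := by obtain ⟨d, k⟩ := p; simp; omega
  right_inv q := by
    obtain ⟨⟨m, n⟩, h⟩ := q
    have h' : n < m := h
    apply Subtype.ext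
    simp
    omega

def e₂ : ℕ × ℕ ≃ s₂ where
  toFun p := ⟨(p.2, p.2 + p.1 + 1), by simp [s₂]⟩
  invFun q := (q.1.2 - q.1.1 - 1, q.1.1)
  left_inv p := by obtain ⟨d, k⟩ := p; simp; omega
  right_inv q := by
    obtain ⟨⟨m, n⟩, h⟩ := q
    have h' : m < n := h
    apply Subtype.ext
    simp
    omega

def e₃ : ℕ ≃ ((s₁ ∪ s₂ : Set (ℕ × ℕ))ᶜ : Set (ℕ × ℕ)) where
  toFun k := ⟨(k, k), by simp [s₁, s₂]⟩
  invFun q := q.1.1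
  left_inv k := rfl
  right_inv q := by
    obtain ⟨⟨m, n⟩, h⟩ := q
    simp only [s₁, s₂, Set.mem_compl_iff, Set.mem_union, Set.mem_setOf_eq, not_or, not_lt] at h
    apply Subtype.ext
    simp
    omega

lemma stuffle_s12 {a b : ℕ} (ha : 2 ≤ a) (hb : 2 ≤ b) :
    rzeta a * rzeta b = dzeta a b + dzeta b a + rzeta (a + b) := by
  set F : ℕ × ℕ → ℝ := tf a b 0 with hF
  have h₁ : HasSum (F ∘ (↑) : s₁ → ℝ) (dzeta a b) := by
    rw [← Equiv.hasSum_iff e₁]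
    have key : HasSum (tf 0 b a) (dzeta a b) := by
      have := (tf_summable (a := 0) (b := b) (c := a) (p := a) (q := 0)
        (by omega) (by omega) (by omega)).hasSum
      rwa [← T, T_dz b a] at this
    have hfun : ((F ∘ (↑)) ∘ ⇑e₁) = tf 0 b a := by
      funext p
      obtain ⟨d, k⟩ := p
      simp only [Function.comp_apply, e₁, Equiv.coe_fn_mk, hF, tf]
      push_cast
      ring_nf
    rw [hfun]
    exact key
  have h₂ : HasSum (F ∘ (↑) : s₂ → ℝ) (dzeta b a) := by
    rw [← Equiv.hasSum_iff e₂]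
    have key : HasSum (tf 0 a b) (dzeta b a) := by
      have := (tf_summable (a := 0) (b := a) (c := b) (p := b) (q := 0)
        (by omega) (by omega) (by omega)).hasSum
      rwa [← T, T_dz a b] at this
    have hfun : ((F ∘ (↑)) ∘ ⇑e₂) = tf 0 a b := by
      funext p
      obtain ⟨d, k⟩ := p
      simp only [Function.comp_apply, e₂, Equiv.coe_fn_mk, hF, tf]
      push_cast
      ring_nf
    rw [hfun]
    exact key
  have hdisj : Disjoint s₁ s₂ := by
    rw [Set.disjoint_left]
    intro p h1 h2
    simp only [s₁, s₂, Set.mem_setOf_eq] at h1 h2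
    omega
  have h₃ : HasSum (F ∘ (↑) : (s₁ ∪ s₂ : Set (ℕ × ℕ)) → ℝ) (dzeta a b + dzeta b a) :=
    h₁.add_disjoint hdisj h₂
  have h₄ : HasSum (F ∘ (↑) : ((s₁ ∪ s₂ : Set (ℕ × ℕ))ᶜ : Set (ℕ × ℕ)) → ℝ)
      (rzeta (a + b)) := by
    rw [← Equiv.hasSum_iff e₃]
    have key : HasSum (fun k : ℕ => 1 / ((k : ℝ) + 1) ^ (a + b)) (rzeta (a + b)) :=
      (rz_summable (by omega)).hasSum
    have hfun : ((F ∘ (↑)) ∘ ⇑e₃) = (fun k : ℕ => 1 / ((k : ℝ) + 1) ^ (a + b)) := by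
      funext k
      simp only [Function.comp_apply, e₃, Equiv.coe_fn_mk, hF, tf]
      rw [pow_zero, mul_one, pow_add]
    rw [hfun]
    exact key
  have htot : HasSum F (dzeta a b + dzeta b a + rzeta (a + b)) := h₃.add_compl h₄
  rw [← T_fact ha hb]
  exact htot.tsum_eq

lemma rzeta_of_hasSum {n : ℕ} {x : ℝ} (hn : n ≠ 0)
    (h : HasSum (fun m : ℕ => (1 : ℝ) / (m : ℝ) ^ n) x) : rzeta n = x := by
  have h' := (hasSum_nat_add_iff' (f := fun m : ℕ => (1 : ℝ) / (m : ℝ) ^ n) 1).2 h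
  simp only [Finset.range_one, Finset.sum_singleton, Nat.cast_zero] at h'
  rw [zero_pow hn, div_zero, sub_zero] at h'
  have h'' : HasSum (fun m : ℕ => 1 / ((m : ℝ) + 1) ^ n) x := by
    refine h'.congr_fun (fun m => ?_)
    push_cast
    ring_nf
  exact h''.tsum_eq

lemma bernoulli'_five : bernoulli' 5 = 0 := by
  rw [bernoulli'_def]
  norm_num [Finset.sum_range_succ, bernoulli'_zero, bernoulli'_one, bernoulli'_two,
    bernoulli'_three, bernoulli'_four, Nat.choose]

lemma bernoulli'_six : bernoulli' 6 = 1 / 42 := by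
  rw [bernoulli'_def]
  norm_num [Finset.sum_range_succ, bernoulli'_zero, bernoulli'_one, bernoulli'_two,
    bernoulli'_three, bernoulli'_four, bernoulli'_five, Nat.choose]

lemma rzeta_two : rzeta 2 = π ^ 2 / 6 := rzeta_of_hasSum two_ne_zero hasSum_zeta_two

lemma rzeta_six : rzeta 6 = π ^ 6 / 945 := by
  apply rzeta_of_hasSum (by norm_num)
  have h := hasSum_zeta_nat (k := 3) (by norm_num)
  norm_num at h
  rw [bernoulli_eq_bernoulli'_of_ne_one (by norm_num), bernoulli'_six] at h
  norm_num [Nat.factorial] at h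
  have hv : (32 : ℝ) * π ^ 6 * (1 / 42) / 720 = π ^ 6 / 945 := by ring
  rw [hv] at h
  exact h.congr_fun (fun n => by simp [one_div])

/-- `ζ(4,2) = ζ(3)² − (32/105)ζ(2)³`. -/
theorem dzeta_four_two : dzeta 4 2 = rzeta 3 ^ 2 - (32 / 105) * rzeta 2 ^ 3 := by
  -- Tornheim sum recursions
  have E330 : T 3 3 0 = T 2 3 1 + T 3 2 1 :=
    T_rec (a := 2) (b := 2) (c := 0)
      (tf_summable (p := 0) (q := 1) (by norm_num) (by norm_num) (by norm_num))
      (tf_summable (p := 0) (q := 1) (by norm_num) (by norm_num) (by norm_num))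
  have S321 : T 3 2 1 = T 2 3 1 := T_symm 3 2 1
  have E231 : T 2 3 1 = T 1 3 2 + T 2 2 2 :=
    T_rec (a := 1) (b := 2) (c := 1)
      (tf_summable (p := 1) (q := 1) (by norm_num) (by norm_num) (by norm_num))
      (tf_summable (p := 0) (q := 2) (by norm_num) (by norm_num) (by norm_num))
  have E240 : T 2 4 0 = T 1 4 1 + T 2 3 1 :=
    T_rec (a := 1) (b := 3) (c := 0)
      (tf_summable (p := 1) (q := 0) (by norm_num) (by norm_num) (by norm_num))
      (tf_summable (p := 0) (q := 1) (by norm_num) (by norm_num) (by norm_num))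
  have E141 : T 1 4 1 = T 0 4 2 + T 1 3 2 :=
    T_rec (a := 0) (b := 3) (c := 1)
      (tf_summable (p := 2) (q := 0) (by norm_num) (by norm_num) (by norm_num))
      (tf_summable (p := 1) (q := 1) (by norm_num) (by norm_num) (by norm_num))
  have E132 : T 1 3 2 = T 0 3 3 + T 1 2 3 :=
    T_rec (a := 0) (b := 2) (c := 2)
      (tf_summable (p := 2) (q := 1) (by norm_num) (by norm_num) (by norm_num))
      (tf_summable (p := 1) (q := 2) (by norm_num) (by norm_num) (by norm_num))
  have E222 : T 2 2 2 = T 1 2 3 + T 2 1 3 :=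
    T_rec (a := 1) (b := 1) (c := 2)
      (tf_summable (p := 1) (q := 2) (by norm_num) (by norm_num) (by norm_num))
      (tf_summable (p := 0) (q := 3) (by norm_num) (by norm_num) (by norm_num))
  have S213 : T 2 1 3 = T 1 2 3 := T_symm 2 1 3
  have E123 : T 1 2 3 = T 0 2 4 + T 1 1 4 :=
    T_rec (a := 0) (b := 1) (c := 3)
      (tf_summable (p := 2) (q := 2) (by norm_num) (by norm_num) (by norm_num))
      (tf_summable (p := 1) (q := 3) (by norm_num) (by norm_num) (by norm_num))
  have E114 : T 1 1 4 = T 0 1 5 + T 1 0 5 :=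
    T_rec (a := 0) (b := 0) (c := 4)
      (tf_summable (p := 2) (q := 3) (by norm_num) (by norm_num) (by norm_num))
      (tf_summable (p := 1) (q := 4) (by norm_num) (by norm_num) (by norm_num))
  have S105 : T 1 0 5 = T 0 1 5 := T_symm 1 0 5
  -- Links to double zeta values
  have L33 : T 0 3 3 = dzeta 3 3 := T_dz 3 3
  have L24 : T 0 4 2 = dzeta 2 4 := T_dz 4 2
  have L42 : T 0 2 4 = dzeta 4 2 := T_dz 2 4
  have L51 : T 0 1 5 = dzeta 5 1 := T_dz 1 5
  -- Factorizations
  have F33 : T 3 3 0 = rzeta 3 * rzeta 3 := T_fact (by norm_num) (by norm_num)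
  have F24 : T 2 4 0 = rzeta 2 * rzeta 4 := T_fact (by norm_num) (by norm_num)
  -- Stuffle relations
  have St33 : rzeta 3 * rzeta 3 = dzeta 3 3 + dzeta 3 3 + rzeta 6 := by
    have := stuffle_s12 (a := 3) (b := 3) (by norm_num) (by norm_num)
    norm_num at this
    exact this
  have St24 : rzeta 2 * rzeta 4 = dzeta 2 4 + dzeta 4 2 + rzeta 6 := by
    have := stuffle_s12 (a := 2) (b := 4) (by norm_num) (by norm_num)
    norm_num at this
    exact this
  -- Zeta values
  have hz2 : rzeta 2 = π ^ 2 / 6 := rzeta_two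
  have hz6 : rzeta 6 = π ^ 6 / 945 := rzeta_six
  have hsq : rzeta 3 ^ 2 = rzeta 3 * rzeta 3 := sq (rzeta 3)
  have hcube : rzeta 2 ^ 3 = π ^ 6 / 216 := by rw [hz2]; ring
  rw [hsq, hcube]
  linarith
end

section
/- In the shuffle algebra on words in letters x, y, the shuffle-regularized zeta value of the word x^a y x^b equals (−1)^b · (a+b)!/(a!b!) · ζ(a+b+1), for a ≥ 1, b ≥ 0. -/
open scoped BigOperators

/-- The two-letter alphabet `{x, y}`. -/
inductive Letter
  | x
  | y

/-- The list of all shuffles of two words. -/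
def shuffle {α : Type*} : List α → List α → List (List α)
  | [], w => [w]
  | a :: u, [] => [a :: u]
  | a :: u, b :: v =>
      ((shuffle u (b :: v)).map (a :: ·)) ++ ((shuffle (a :: u) v).map (b :: ·))
termination_by u v => u.length + v.length

open Letter List in
lemma shuffle_single_rep (b : ℕ) :
    shuffle [x] (replicate b x) = replicate (b + 1) (replicate (b + 1) x) := by
  induction b with
  | zero => simp [shuffle]
  | succ b ih =>
      rw [replicate_succ]
      rw [shuffle]
      rw [ih]
      simp [shuffle, replicate_succ, map_replicate]

open Letter List in
lemma shuffle_single_word (a b : ℕ) :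
    shuffle [x] (replicate a x ++ y :: replicate b x)
      = replicate (a + 1) (replicate (a + 1) x ++ y :: replicate b x)
        ++ replicate (b + 1) (replicate a x ++ y :: replicate (b + 1) x) := by
  induction a with
  | zero =>
      simp only [replicate_zero, nil_append]
      rw [shuffle]
      rw [shuffle_single_rep]
      simp [shuffle, map_replicate]
  | succ a ih =>
      rw [replicate_succ, cons_append]
      rw [shuffle]
      rw [ih]
      simp [shuffle, map_replicate, replicate_succ]

open Letter List in
lemma key_rec (Z : List Letter → ℝ)
    (hchar : ∀ u v : List Letter, Z u * Z v = ((shuffle u v).map Z).sum)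
    (hx : Z [Letter.x] = 0) (a b : ℕ) :
    ((a : ℝ) + 1) * Z (replicate (a + 1) x ++ y :: replicate b x)
      + ((b : ℝ) + 1) * Z (replicate a x ++ y :: replicate (b + 1) x) = 0 := by
  have h := hchar [x] (replicate a x ++ y :: replicate b x)
  rw [hx, zero_mul, shuffle_single_word] at h
  rw [List.map_append, List.sum_append, map_replicate, map_replicate,
    sum_replicate, sum_replicate, nsmul_eq_mul, nsmul_eq_mul] at h
  push_cast at h
  linarith

/-- Let `Z` be a character of the shuffle algebra on words in `x, y` with `Z(x) = Z(y) = 0`,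
agreeing with the multiple zeta values on admissible words (in particular `Z(x^n y) = ζ(n+1)`).
Then the shuffle-regularized zeta value of `x^a y x^b` is
`(−1)^b · (a+b)!/(a! b!) · ζ(a+b+1)` for `a ≥ 1`. -/
theorem regularized_zeta_word (Z : List Letter → ℝ)
    (hchar : ∀ u v : List Letter, Z u * Z v = ((shuffle u v).map Z).sum)
    (hx : Z [Letter.x] = 0) (hy : Z [Letter.y] = 0)
    (hadm : ∀ n : ℕ, 1 ≤ n →
      Z (List.replicate n Letter.x ++ [Letter.y]) = rzeta (n + 1)) :
    ∀ a b : ℕ, 1 ≤ a →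
      Z (List.replicate a Letter.x ++ [Letter.y] ++ List.replicate b Letter.x)
        = (-1 : ℝ) ^ b * (Nat.factorial (a + b) : ℝ)
            / ((Nat.factorial a : ℝ) * (Nat.factorial b : ℝ)) * rzeta (a + b + 1) := by
  suffices H : ∀ b a : ℕ, 1 ≤ a →
      Z (List.replicate a Letter.x ++ Letter.y :: List.replicate b Letter.x)
        = (-1 : ℝ) ^ b * (Nat.factorial (a + b) : ℝ)
            / ((Nat.factorial a : ℝ) * (Nat.factorial b : ℝ)) * rzeta (a + b + 1) by
    intro a b ha
    have := H b a ha
    simpa [List.append_assoc] using this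
  intro b
  induction b with
  | zero =>
      intro a ha
      have := hadm a ha
      simp only [List.replicate_zero] at *
      simp only [pow_zero, Nat.add_zero, Nat.factorial_zero, Nat.cast_one, mul_one, one_mul]
      rw [this, div_self (by positivity : ((Nat.factorial a : ℝ)) ≠ 0), one_mul]
  | succ b ih =>
      intro a ha
      have hrec := key_rec Z hchar hx a b
      have hIH := ih (a + 1) (by omega)
      have hb1 : ((b : ℝ) + 1) ≠ 0 := by positivity
      have hZ : Z (List.replicate a Letter.x ++ Letter.y :: List.replicate (b + 1) Letter.x)
          = -(((a : ℝ) + 1) / ((b : ℝ) + 1))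
            * Z (List.replicate (a + 1) Letter.x ++ Letter.y :: List.replicate b Letter.x) := by
        field_simp
        linarith
      rw [hZ, hIH]
      have hn : a + 1 + b + 1 = a + (b + 1) + 1 := by omega
      rw [show a + 1 + b = a + (b + 1) by omega]
      have hfa : ((Nat.factorial a : ℝ)) ≠ 0 := by positivity
      have hfb : ((Nat.factorial b : ℝ)) ≠ 0 := by positivity
      rw [Nat.factorial_succ a, Nat.factorial_succ b]
      push_cast
      field_simp
      ring
end

section
/- ζ(4)ζ(2) = 4ζ(4,2) + 8ζ(5,1) + 2ζ(3,3) + ζ(2,4) (a shuffle relation among weight-6 double zeta values). -/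
open scoped BigOperators

namespace ShuffleAux

/-- Auxiliary functions: the six kinds of terms appearing in the decomposition. -/
noncomputable def G (r s : ℕ) (c : Bool) (p : ℕ × ℕ) : ℝ :=
  if c then 1 / (((p.1 : ℝ) + (p.2 : ℝ) + 2) ^ r * ((p.2 : ℝ) + 1) ^ s)
  else 1 / (((p.1 : ℝ) + (p.2 : ℝ) + 2) ^ r * ((p.1 : ℝ) + 1) ^ s)

/-- Bijection sending `(m, n)` to `(m+n+2, n+1)`, onto pairs `j > k ≥ 1`. -/
def eN : ℕ × ℕ ≃ {q : ℕ × ℕ // q.2 < q.1 ∧ 0 < q.2} where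
  toFun p := ⟨(p.1 + p.2 + 2, p.2 + 1), by omega⟩
  invFun q := (q.1.1 - q.1.2 - 1, q.1.2 - 1)
  left_inv p := by obtain ⟨m, n⟩ := p; simp [Prod.ext_iff]; omega
  right_inv q := by
    obtain ⟨⟨j, k⟩, h⟩ := q
    simp only [Subtype.mk.injEq, Prod.mk.injEq]
    omega

/-- Bijection sending `(m, n)` to `(m+n+2, m+1)`, onto pairs `j > k ≥ 1`. -/
def eM : ℕ × ℕ ≃ {q : ℕ × ℕ // q.2 < q.1 ∧ 0 < q.2} where
  toFun p := ⟨(p.1 + p.2 + 2, p.1 + 1), by omega⟩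
  invFun q := (q.1.2 - 1, q.1.1 - q.1.2 - 1)
  left_inv p := by obtain ⟨m, n⟩ := p; simp [Prod.ext_iff]; omega
  right_inv q := by
    obtain ⟨⟨j, k⟩, h⟩ := q
    simp only [Subtype.mk.injEq, Prod.mk.injEq]
    omega

lemma dzeta_eq_N (r s : ℕ) : dzeta r s = ∑' p : ℕ × ℕ, G r s true p := by
  rw [dzeta, ← (eN).tsum_eq]
  congr 1
  funext p
  simp only [eN, Equiv.coe_fn_mk, G, if_true]
  push_cast
  ring_nf

lemma dzeta_eq_M (r s : ℕ) : dzeta r s = ∑' p : ℕ × ℕ, G r s false p := by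
  rw [dzeta, ← (eM).tsum_eq]
  congr 1
  funext p
  simp only [eM, Equiv.coe_fn_mk, G, Bool.false_eq_true, if_false]
  push_cast
  ring_nf

/-- The key partial-fraction identity. -/
lemma key (a b : ℝ) (ha : 0 < a) (hb : 0 < b) :
    1 / (a ^ 4 * b ^ 2) =
      1 / ((a + b) ^ 4 * b ^ 2) + 4 * (1 / ((a + b) ^ 5 * b ^ 1)) +
      (1 / ((a + b) ^ 2 * a ^ 4) + 2 * (1 / ((a + b) ^ 3 * a ^ 3)) +
       3 * (1 / ((a + b) ^ 4 * a ^ 2)) + 4 * (1 / ((a + b) ^ 5 * a ^ 1))) := by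
  have hab : 0 < a + b := by linarith
  field_simp
  ring

lemma summable_p (n : ℕ) (hn : 2 ≤ n) : Summable fun m : ℕ => 1 / ((m : ℝ) + 1) ^ n := by
  have h := Real.summable_one_div_nat_pow.mpr hn
  have := (summable_nat_add_iff 1).mpr h
  refine this.congr fun m => ?_
  push_cast
  ring_nf

noncomputable def F (p : ℕ × ℕ) : ℝ := 1 / (((p.1 : ℝ) + 1) ^ 4 * ((p.2 : ℝ) + 1) ^ 2)

lemma summable_F : Summable F := by
  have h := (summable_p 4 (by norm_num)).mul_of_nonneg (summable_p 2 (by norm_num))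
    (fun m => by positivity) (fun n => by positivity)
  refine h.congr fun p => ?_
  rw [F, div_mul_div_comm, one_mul]

lemma G_nonneg (r s : ℕ) (c : Bool) (p : ℕ × ℕ) : 0 ≤ G r s c p := by
  cases c <;> simp only [G, if_true, Bool.false_eq_true, if_false] <;> positivity

lemma key' (p : ℕ × ℕ) :
    F p = G 4 2 true p + 4 * G 5 1 true p +
      (G 2 4 false p + 2 * G 3 3 false p + 3 * G 4 2 false p + 4 * G 5 1 false p) := by
  have h := key ((p.1 : ℝ) + 1) ((p.2 : ℝ) + 1) (by positivity) (by positivity)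
  simp only [F, G, if_true, Bool.false_eq_true, if_false]
  convert h using 3 <;> ring

lemma sG (r s : ℕ) (c : Bool) (hle : ∀ p, G r s c p ≤ F p) : Summable (G r s c) :=
  Summable.of_nonneg_of_le (G_nonneg r s c) hle summable_F

lemma h42t : Summable (G 4 2 true) := by
  refine sG _ _ _ fun p => ?_
  rw [key' p]
  have h2 := G_nonneg 5 1 true p; have h3 := G_nonneg 2 4 false p
  have h4 := G_nonneg 3 3 false p; have h5 := G_nonneg 4 2 false p
  have h6 := G_nonneg 5 1 false p
  linarith

lemma h51t : Summable (G 5 1 true) := by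
  refine sG _ _ _ fun p => ?_
  rw [key' p]
  have h1 := G_nonneg 4 2 true p; have h2 := G_nonneg 5 1 true p
  have h3 := G_nonneg 2 4 false p; have h4 := G_nonneg 3 3 false p
  have h5 := G_nonneg 4 2 false p; have h6 := G_nonneg 5 1 false p
  linarith

lemma h24f : Summable (G 2 4 false) := by
  refine sG _ _ _ fun p => ?_
  rw [key' p]
  have h1 := G_nonneg 4 2 true p; have h2 := G_nonneg 5 1 true p
  have h4 := G_nonneg 3 3 false p; have h5 := G_nonneg 4 2 false p
  have h6 := G_nonneg 5 1 false p
  linarith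

lemma h33f : Summable (G 3 3 false) := by
  refine sG _ _ _ fun p => ?_
  rw [key' p]
  have h1 := G_nonneg 4 2 true p; have h2 := G_nonneg 5 1 true p
  have h3 := G_nonneg 2 4 false p; have h4 := G_nonneg 3 3 false p
  have h5 := G_nonneg 4 2 false p; have h6 := G_nonneg 5 1 false p
  linarith

lemma h42f : Summable (G 4 2 false) := by
  refine sG _ _ _ fun p => ?_
  rw [key' p]
  have h1 := G_nonneg 4 2 true p; have h2 := G_nonneg 5 1 true p
  have h3 := G_nonneg 2 4 false p; have h4 := G_nonneg 3 3 false p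
  have h5 := G_nonneg 4 2 false p; have h6 := G_nonneg 5 1 false p
  linarith

lemma h51f : Summable (G 5 1 false) := by
  refine sG _ _ _ fun p => ?_
  rw [key' p]
  have h1 := G_nonneg 4 2 true p; have h2 := G_nonneg 5 1 true p
  have h3 := G_nonneg 2 4 false p; have h4 := G_nonneg 3 3 false p
  have h5 := G_nonneg 4 2 false p; have h6 := G_nonneg 5 1 false p
  linarith

end ShuffleAux

open ShuffleAux in
/-- `ζ(4)ζ(2) = 4ζ(4,2) + 8ζ(5,1) + 2ζ(3,3) + ζ(2,4)`. -/
theorem shuffle_weight_six :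
    rzeta 4 * rzeta 2 = 4 * dzeta 4 2 + 8 * dzeta 5 1 + 2 * dzeta 3 3 + dzeta 2 4 := by
  have step1 : rzeta 4 * rzeta 2 = ∑' p : ℕ × ℕ, F p := by
    rw [rzeta, rzeta,
      Summable.tsum_mul_tsum (summable_p 4 (by norm_num)) (summable_p 2 (by norm_num))
        (by
          refine summable_F.congr fun p => ?_
          rw [F, div_mul_div_comm, one_mul])]
    exact tsum_congr fun p => by rw [F, div_mul_div_comm, one_mul]
  have step2 : (∑' p : ℕ × ℕ, F p) =
      (∑' p : ℕ × ℕ, G 4 2 true p) + 4 * (∑' p : ℕ × ℕ, G 5 1 true p) +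
      ((∑' p : ℕ × ℕ, G 2 4 false p) + 2 * (∑' p : ℕ × ℕ, G 3 3 false p) +
       3 * (∑' p : ℕ × ℕ, G 4 2 false p) + 4 * (∑' p : ℕ × ℕ, G 5 1 false p)) := by
    rw [tsum_congr key']
    rw [Summable.tsum_add ((h42t.add (h51t.mul_left 4)))
      ((((h24f.add (h33f.mul_left 2)).add (h42f.mul_left 3)).add (h51f.mul_left 4)))]
    rw [Summable.tsum_add h42t (h51t.mul_left 4)]
    rw [Summable.tsum_add ((h24f.add (h33f.mul_left 2)).add (h42f.mul_left 3))
      (h51f.mul_left 4)]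
    rw [Summable.tsum_add (h24f.add (h33f.mul_left 2)) (h42f.mul_left 3)]
    rw [Summable.tsum_add h24f (h33f.mul_left 2)]
    rw [tsum_mul_left, tsum_mul_left, tsum_mul_left, tsum_mul_left]
  rw [step1, step2, ← dzeta_eq_N 4 2, ← dzeta_eq_N 5 1, ← dzeta_eq_M 2 4, ← dzeta_eq_M 3 3,
    ← dzeta_eq_M 4 2, ← dzeta_eq_M 5 1]
  ring
end
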